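/- Let Z₀ = λ₁x∂x + λ₂y∂y with λ := λ₁/λ₂ ∈ ℝ₍<0₎ \ ℚ, and let Ŷ ≠ 0 be a formal meromorphic vector field (components in ℂ((x,y)), formal Laurent in x and y) satisfying [Z₀, Ŷ] = δŶ for some δ ∈ ℂ. Then there exist unique (n,m) ∈ ℤ² and (c,d) ∈ ℂ² such that δ = nλ₁ + mλ₂ and Ŷ(x,y) = xⁿyᵐ(dx∂x + cy∂y). -/

import Mathlib

/-! `Z₀` acts diagonally on monomials: `Z₀·(xᵃyᵇ) = (aλ₁ + bλ₂) xᵃyᵇ`. As `λ₁/λ₂` is irrational,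
`λ₁, λ₂` are linearly independent over `ℤ`, so distinct exponents have distinct weights and every
eigenvector of `Z₀` is a single monomial. A nonzero component of `Ŷ` therefore forces
`δ = nλ₁ + mλ₂` with `n, m ∈ ℤ`; the eigenvalue equations then make `D` and `C` multiples of the
monomials of the corresponding weights, and linear independence gives uniqueness. -/

noncomputable section
open MvPowerSeries

/- A formal meromorphic field with poles along `x^P y^Q` is `(D ∂x + C ∂y) / (x^P y^Q)` with
`D, C ∈ ℂ[[x,y]]`; `[Z₀, Ŷ] = δŶ` then becomes the eigenvalue equations in `hD`, `hC` below, and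
`Ŷ = xⁿyᵐ(d x∂x + c y∂y)` becomes `D = d x^(n+1+P) y^(m+Q)`, `C = c x^(n+P) y^(m+1+Q)`. -/

abbrev R2 := MvPowerSeries (Fin 2) ℂ

def pd (i : Fin 2) (f : R2) : R2 :=
  fun d => ((d i : ℂ) + 1) * MvPowerSeries.coeff (R := ℂ) (d + Finsupp.single i 1) f

/-- Z₀·f for Z₀ = λ₁x∂x + λ₂y∂y -/
def Z0D (lam₁ lam₂ : ℂ) (f : R2) : R2 :=
  MvPowerSeries.C (σ := Fin 2) (R := ℂ) lam₁ * MvPowerSeries.X 0 * pd 0 f +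
    MvPowerSeries.C (σ := Fin 2) (R := ℂ) lam₂ * MvPowerSeries.X 1 * pd 1 f

section

variable {l₁ l₂ : ℂ}

theorem linearIndependent_int_pair_of_div_ne_ratCast (hirr : ∀ q : ℚ, l₁ / l₂ ≠ q) :
    LinearIndependent ℤ ![l₁, l₂] := by
  have hl₂ : l₂ ≠ 0 := fun h => hirr 0 (by simp [h])
  refine LinearIndependent.pair_iff.mpr fun a b hab => ?_
  rw [zsmul_eq_mul, zsmul_eq_mul] at hab
  have ha : a = 0 := by
    by_contra ha
    apply hirr (-b / a)
    have : (a : ℂ) ≠ 0 := Int.cast_ne_zero.mpr ha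
    push_cast
    field_simp
    linear_combination hab
  subst ha
  simpa [hl₂] using hab

theorem LinearIndependent.intCast_eq_of_pair (h : LinearIndependent ℤ ![l₁, l₂]) {a b a' b' : ℤ}
    (e : (a : ℂ) * l₁ + b * l₂ = a' * l₁ + b' * l₂) : a = a' ∧ b = b' :=
  h.eq_of_pair (by simpa only [zsmul_eq_mul] using e)

end

theorem coeff_X_mul_pd (i : Fin 2) (f : R2) (d : Fin 2 →₀ ℕ) :
    coeff d (X i * pd i f) = d i * coeff d f := by
  rw [X_def, coeff_monomial_mul, one_mul]
  split_ifs with hle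
  · show ((_ : ℂ) + 1) * coeff (d - Finsupp.single i 1 + Finsupp.single i 1) f = _
    have hd : 1 ≤ d i := by simpa using hle i
    rw [tsub_add_cancel_of_le hle, Finsupp.tsub_apply, Finsupp.single_eq_same,
      Nat.cast_sub hd, Nat.cast_one, sub_add_cancel]
  · have hdi : d i = 0 := by
      by_contra hne
      exact hle (Finsupp.single_le_iff.mpr (Nat.one_le_iff_ne_zero.mpr hne))
    simp [hdi]

theorem coeff_Z0D (l₁ l₂ : ℂ) (f : R2) (d : Fin 2 →₀ ℕ) :
    coeff d (Z0D l₁ l₂ f) = ((d 0 : ℂ) * l₁ + (d 1 : ℂ) * l₂) * coeff d f := by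
  simp only [Z0D, map_add, mul_assoc, coeff_C_mul, coeff_X_mul_pd]
  ring

theorem weight_eq_of_Z0D_eq_of_coeff_ne_zero {l₁ l₂ μ : ℂ} {f : R2}
    (h : Z0D l₁ l₂ f = C μ * f) {d : Fin 2 →₀ ℕ} (hd : coeff d f ≠ 0) :
    (d 0 : ℂ) * l₁ + (d 1 : ℂ) * l₂ = μ := by
  have := congrArg (coeff d) h
  rw [coeff_Z0D, coeff_C_mul] at this
  exact mul_right_cancel₀ hd this

theorem exists_weight_eq_of_Z0D_eq {l₁ l₂ μ : ℂ} {f : R2}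
    (h : Z0D l₁ l₂ f = C μ * f) (hf : f ≠ 0) :
    ∃ a b : ℕ, (a : ℂ) * l₁ + (b : ℂ) * l₂ = μ := by
  obtain ⟨d, hd⟩ := (ne_zero_iff_exists_coeff_ne_zero f).mp hf
  exact ⟨d 0, d 1, weight_eq_of_Z0D_eq_of_coeff_ne_zero h hd⟩

theorem C_mul_X_pow_mul_X_pow (a : ℂ) (i j : ℕ) :
    C a * X 0 ^ i * X 1 ^ j = (monomial (Finsupp.single 0 i + Finsupp.single 1 j) a : R2) := by
  rw [X_pow_eq, X_pow_eq, ← monomial_zero_eq_C_apply, monomial_mul_monomial,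
    monomial_mul_monomial, mul_one, mul_one, zero_add]

theorem coeff_C_mul_X_pow_mul_X_pow (a : ℂ) (i j : ℕ) :
    coeff (Finsupp.single 0 i + Finsupp.single 1 j) (C a * X 0 ^ i * X 1 ^ j : R2) = a := by
  rw [C_mul_X_pow_mul_X_pow, coeff_monomial_same]

-- For negative `i` or `j` both sides vanish, since no monomial has that weight.
theorem eq_C_mul_X_pow_mul_X_pow_of_Z0D_eq {l₁ l₂ : ℂ} (hli : LinearIndependent ℤ ![l₁, l₂])
    {i j : ℤ} {f : R2} (h : Z0D l₁ l₂ f = C ((i : ℂ) * l₁ + (j : ℂ) * l₂) * f) :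
    f = C (coeff (Finsupp.single 0 i.toNat + Finsupp.single 1 j.toNat) f) *
      X 0 ^ i.toNat * X 1 ^ j.toNat := by
  classical
  rw [C_mul_X_pow_mul_X_pow]
  ext d
  rw [coeff_monomial]
  split_ifs with hd
  · rw [hd]
  by_contra hne
  have hw := weight_eq_of_Z0D_eq_of_coeff_ne_zero h hne
  obtain ⟨h0, h1⟩ := hli.intCast_eq_of_pair (a := d 0) (b := d 1) (by exact_mod_cast hw)
  exact hd (Finsupp.ext fun k => by fin_cases k <;> simp <;> omega)

theorem stmt8_general (lam₁ lam₂ : ℂ)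
    (hirr : ∀ q : ℚ, lam₁ / lam₂ ≠ (q : ℂ))
    (δ : ℂ) (P Q : ℕ) (D C : R2)
    -- Ŷ ≠ 0 :
    (hne : ¬ (D = 0 ∧ C = 0))
    -- [Z₀, Ŷ] = δ·Ŷ, with poles x^P y^Q cleared :
    (hD : Z0D lam₁ lam₂ D = MvPowerSeries.C (σ := Fin 2) (R := ℂ)
      (δ + lam₁ + (P : ℂ) * lam₁ + (Q : ℂ) * lam₂) * D)
    (hC : Z0D lam₁ lam₂ C = MvPowerSeries.C (σ := Fin 2) (R := ℂ)
      (δ + lam₂ + (P : ℂ) * lam₁ + (Q : ℂ) * lam₂) * C) :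
    ∃! w : (ℤ × ℤ) × ℂ × ℂ,
      δ = (w.1.1 : ℂ) * lam₁ + (w.1.2 : ℂ) * lam₂ ∧
      D = MvPowerSeries.C (σ := Fin 2) (R := ℂ) w.2.2 *
            MvPowerSeries.X 0 ^ (w.1.1 + 1 + P).toNat *
            MvPowerSeries.X 1 ^ (w.1.2 + Q).toNat ∧
      C = MvPowerSeries.C (σ := Fin 2) (R := ℂ) w.2.1 *
            MvPowerSeries.X 0 ^ (w.1.1 + P).toNat *
            MvPowerSeries.X 1 ^ (w.1.2 + 1 + Q).toNat := by
  have hli := linearIndependent_int_pair_of_div_ne_ratCast hirr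
  obtain ⟨n, m, hδ⟩ : ∃ n m : ℤ, δ = n * lam₁ + m * lam₂ := by
    by_cases hD0 : D = 0
    · obtain ⟨a, b, hab⟩ := exists_weight_eq_of_Z0D_eq hC fun hC0 => hne ⟨hD0, hC0⟩
      exact ⟨a - P, b - 1 - Q, by push_cast; linear_combination -hab⟩
    · obtain ⟨a, b, hab⟩ := exists_weight_eq_of_Z0D_eq hD hD0
      exact ⟨a - 1 - P, b - Q, by push_cast; linear_combination -hab⟩
  rw [show δ + lam₁ + P * lam₁ + Q * lam₂ =
      ((n + 1 + P : ℤ) : ℂ) * lam₁ + ((m + Q : ℤ) : ℂ) * lam₂ by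
    push_cast; linear_combination hδ] at hD
  rw [show δ + lam₂ + P * lam₁ + Q * lam₂ =
      ((n + P : ℤ) : ℂ) * lam₁ + ((m + 1 + Q : ℤ) : ℂ) * lam₂ by
    push_cast; linear_combination hδ] at hC
  have hDmon := eq_C_mul_X_pow_mul_X_pow_of_Z0D_eq hli hD
  have hCmon := eq_C_mul_X_pow_mul_X_pow_of_Z0D_eq hli hC
  refine ⟨((n, m), _, _), ⟨hδ, hDmon, hCmon⟩, ?_⟩
  rintro ⟨⟨n', m'⟩, c', d'⟩ ⟨hδ', hD', hC'⟩
  obtain ⟨rfl, rfl⟩ := hli.intCast_eq_of_pair (hδ'.symm.trans hδ)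
  simp only at hD' hC'
  rw [hD', coeff_C_mul_X_pow_mul_X_pow, hC', coeff_C_mul_X_pow_mul_X_pow]

theorem stmt8 (lam₁ lam₂ : ℂ) (hlam₂ : lam₂ ≠ 0)
    -- λ = λ₁/λ₂ ∈ ℝ_{<0} \ ℚ :
    (hreal : ∃ r : ℝ, lam₁ / lam₂ = (r : ℂ) ∧ r < 0)
    (hirr : ∀ q : ℚ, lam₁ / lam₂ ≠ (q : ℂ))
    (δ : ℂ) (P Q : ℕ) (D C : R2)
    -- Ŷ ≠ 0 :
    (hne : ¬ (D = 0 ∧ C = 0))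
    -- [Z₀, Ŷ] = δ·Ŷ, with poles x^P y^Q cleared :
    (hD : Z0D lam₁ lam₂ D = MvPowerSeries.C (σ := Fin 2) (R := ℂ)
      (δ + lam₁ + (P : ℂ) * lam₁ + (Q : ℂ) * lam₂) * D)
    (hC : Z0D lam₁ lam₂ C = MvPowerSeries.C (σ := Fin 2) (R := ℂ)
      (δ + lam₂ + (P : ℂ) * lam₁ + (Q : ℂ) * lam₂) * C) :
    ∃! w : (ℤ × ℤ) × ℂ × ℂ,
      δ = (w.1.1 : ℂ) * lam₁ + (w.1.2 : ℂ) * lam₂ ∧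
      D = MvPowerSeries.C (σ := Fin 2) (R := ℂ) w.2.2 *
            MvPowerSeries.X 0 ^ (w.1.1 + 1 + P).toNat *
            MvPowerSeries.X 1 ^ (w.1.2 + Q).toNat ∧
      C = MvPowerSeries.C (σ := Fin 2) (R := ℂ) w.2.1 *
            MvPowerSeries.X 0 ^ (w.1.1 + P).toNat *
            MvPowerSeries.X 1 ^ (w.1.2 + 1 + Q).toNat :=
  stmt8_general lam₁ lam₂ hirr δ P Q D C hne hD hC
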